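/- Let G be a connected graph on vertex set {1,...,n} with n ≥ 2 and Φ = (F_1,...,F_n) with |V(F_i)| ≥ 2 for all i. Then γ_t(G) = γ_t(G[Φ]) = γ_{tr}(G[Φ]) = γ_t^{oc}(G[Φ]). -/

import Mathlib

open scoped Classical

/-- A dominating set: every vertex is in `D` or adjacent to a vertex of `D`. -/
def isDominatingSet {V : Type*} (H : SimpleGraph V) (D : Finset V) : Prop :=
  ∀ v : V, v ∈ D ∨ ∃ u ∈ D, H.Adj u v

/-- A total dominating set: every vertex has a neighbor in `D`. -/
def isTotalDominatingSet {V : Type*} (H : SimpleGraph V) (D : Finset V) : Prop :=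
  ∀ v : V, ∃ u ∈ D, H.Adj u v

def isMinimalDominatingSet {V : Type*} (H : SimpleGraph V) (D : Finset V) : Prop :=
  isDominatingSet H D ∧ ∀ D' : Finset V, D' ⊂ D → ¬ isDominatingSet H D'

def isMinimalTotalDominatingSet {V : Type*} (H : SimpleGraph V) (D : Finset V) : Prop :=
  isTotalDominatingSet H D ∧ ∀ D' : Finset V, D' ⊂ D → ¬ isTotalDominatingSet H D'

noncomputable def domNum {V : Type*} (H : SimpleGraph V) : ℕ :=
  sInf {k | ∃ D : Finset V, isDominatingSet H D ∧ D.card = k}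

noncomputable def totalDomNum {V : Type*} (H : SimpleGraph V) : ℕ :=
  sInf {k | ∃ D : Finset V, isTotalDominatingSet H D ∧ D.card = k}

noncomputable def upperDomNum {V : Type*} (H : SimpleGraph V) : ℕ :=
  sSup {k | ∃ D : Finset V, isMinimalDominatingSet H D ∧ D.card = k}

noncomputable def upperTotalDomNum {V : Type*} (H : SimpleGraph V) : ℕ :=
  sSup {k | ∃ D : Finset V, isMinimalTotalDominatingSet H D ∧ D.card = k}

/-- Well (γ-)dominated: all minimal dominating sets have the same size. -/
def WellDominated {V : Type*} (H : SimpleGraph V) : Prop :=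
  ∀ D₁ D₂ : Finset V, isMinimalDominatingSet H D₁ → isMinimalDominatingSet H D₂ →
    D₁.card = D₂.card

/-- Well γ_t-dominated: all minimal total dominating sets have the same size. -/
def WellTotalDominated {V : Type*} (H : SimpleGraph V) : Prop :=
  ∀ D₁ D₂ : Finset V, isMinimalTotalDominatingSet H D₁ → isMinimalTotalDominatingSet H D₂ →
    D₁.card = D₂.card

/-- Restrained dominating set: dominating and every vertex outside `D` has a
neighbor outside `D`. -/
def isRestrainedDominatingSet {V : Type*} (H : SimpleGraph V) (D : Finset V) : Prop :=
  isDominatingSet H D ∧ ∀ v ∉ D, ∃ u ∉ D, H.Adj u v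

/-- Outer-connected dominating set: dominating and the subgraph induced by the
complement of `D` is connected. -/
def isOuterConnectedDominatingSet {V : Type*} (H : SimpleGraph V) (D : Finset V) : Prop :=
  isDominatingSet H D ∧ (H.induce ((↑D : Set V)ᶜ)).Connected

def isTotalRestrainedDominatingSet {V : Type*} (H : SimpleGraph V) (D : Finset V) : Prop :=
  isTotalDominatingSet H D ∧ ∀ v ∉ D, ∃ u ∉ D, H.Adj u v

def isTotalOuterConnectedDominatingSet {V : Type*} (H : SimpleGraph V) (D : Finset V) : Prop :=
  isTotalDominatingSet H D ∧ (H.induce ((↑D : Set V)ᶜ)).Connected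

noncomputable def restrainedDomNum {V : Type*} (H : SimpleGraph V) : ℕ :=
  sInf {k | ∃ D : Finset V, isRestrainedDominatingSet H D ∧ D.card = k}

noncomputable def ocDomNum {V : Type*} (H : SimpleGraph V) : ℕ :=
  sInf {k | ∃ D : Finset V, isOuterConnectedDominatingSet H D ∧ D.card = k}

noncomputable def totalRestrainedDomNum {V : Type*} (H : SimpleGraph V) : ℕ :=
  sInf {k | ∃ D : Finset V, isTotalRestrainedDominatingSet H D ∧ D.card = k}

noncomputable def totalOcDomNum {V : Type*} (H : SimpleGraph V) : ℕ :=
  sInf {k | ∃ D : Finset V, isTotalOuterConnectedDominatingSet H D ∧ D.card = k}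

/-- Paired dominating set: dominating and the induced subgraph on `D` has a
perfect matching. -/
def isPairedDominatingSet {V : Type*} (H : SimpleGraph V) (D : Finset V) : Prop :=
  isDominatingSet H D ∧
    ∃ M : SimpleGraph.Subgraph (H.induce (↑D : Set V)), M.IsPerfectMatching

noncomputable def pairedDomNum {V : Type*} (H : SimpleGraph V) : ℕ :=
  sInf {k | ∃ D : Finset V, isPairedDominatingSet H D ∧ D.card = k}

def isIndependentSet {V : Type*} (H : SimpleGraph V) (D : Finset V) : Prop :=
  ∀ u ∈ D, ∀ v ∈ D, ¬ H.Adj u v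

def isMaximalIndependentSet {V : Type*} (H : SimpleGraph V) (D : Finset V) : Prop :=
  isIndependentSet H D ∧ ∀ D' : Finset V, D ⊂ D' → ¬ isIndependentSet H D'

/-- The independent domination number `i(H)`. -/
noncomputable def indepDomNum {V : Type*} (H : SimpleGraph V) : ℕ :=
  sInf {k | ∃ D : Finset V, isMaximalIndependentSet H D ∧ D.card = k}

/-- The independence number `β₀(H)`. -/
noncomputable def indepNum {V : Type*} (H : SimpleGraph V) : ℕ :=
  sSup {k | ∃ D : Finset V, isIndependentSet H D ∧ D.card = k}

/-- An efficient dominating set: every vertex is dominated by exactly one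
member of `D`. -/
def isEfficientDominatingSet {V : Type*} (H : SimpleGraph V) (D : Finset V) : Prop :=
  ∀ v : V, ∃! u : V, u ∈ D ∧ (u = v ∨ H.Adj u v)

/-- The generalized lexicographic product `G[Φ]` of a graph `G` on `Fin n` and a
family `Φ = (F 0, …, F (n-1))` of pairwise disjoint graphs: the `F i` are induced
subgraphs, and vertices in distinct `F i`, `F j` are adjacent iff `i j ∈ E(G)`. -/
def GLP {n : ℕ} (G : SimpleGraph (Fin n)) {V : Fin n → Type*}
    (F : ∀ i, SimpleGraph (V i)) : SimpleGraph (Σ i, V i) where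
  Adj x y := (x.1 ≠ y.1 ∧ G.Adj x.1 y.1) ∨ ∃ h : x.1 = y.1, (F y.1).Adj (h ▸ x.2) y.2
  symm := by
    refine ⟨?_⟩
    rintro ⟨i, a⟩ ⟨j, b⟩ (⟨hne, hadj⟩ | ⟨h, hadj⟩)
    · exact Or.inl ⟨fun hh => hne hh.symm, hadj.symm⟩
    · dsimp only at h
      subst h
      exact Or.inr ⟨rfl, hadj.symm⟩
  loopless := by
    refine ⟨?_⟩
    rintro ⟨i, a⟩ (⟨hne, _⟩ | ⟨h, hadj⟩)
    · exact hne rfl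
    · exact (F i).irrefl hadj

/-- The number of vertices of `D ∩ V(F i)`. -/
noncomputable def layerCount {n : ℕ} {V : Fin n → Type*} [∀ i, Fintype (V i)]
    (D : Finset (Σ i, V i)) (i : Fin n) : ℕ :=
  (D.filter (fun x => x.1 = i)).card

/-!
A total dominating set `D` of `G`, placed in `G[Φ]` as one vertex `⟨i, a i⟩` for each `i ∈ D`,
is totally dominating and misses a second section `i ↦ ⟨i, r i⟩`. As `G` is connected without
isolated vertices, this section keeps the complement connected and free of isolated vertices.
Conversely, the layers met by a total dominating set of `G[Φ]` totally dominate `G`, except for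
layers dominated only from inside, which then hold two vertices of the set; trading the second one
for a `G`-neighbour of the layer gives a total dominating set of `G` that is no larger.
-/

lemma sInf_card_le_sInf_card {α β : Type*} {P : Finset α → Prop} {Q : Finset β → Prop}
    (hQ : ∃ D, Q D) (h : ∀ D, Q D → ∃ D', P D' ∧ D'.card ≤ D.card) :
    sInf {k | ∃ D, P D ∧ D.card = k} ≤ sInf {k | ∃ D, Q D ∧ D.card = k} := by
  obtain ⟨D₀, hD₀⟩ := hQ
  have hne : {k | ∃ D, Q D ∧ D.card = k}.Nonempty := ⟨_, D₀, hD₀, rfl⟩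
  obtain ⟨D, hD, hDcard⟩ := Nat.sInf_mem hne
  obtain ⟨D', hD', hcard⟩ := h D hD
  have hmin : sInf {k | ∃ D, P D ∧ D.card = k} ≤ D'.card := Nat.sInf_le ⟨D', hD', rfl⟩
  exact hmin.trans (hcard.trans hDcard.le)

lemma isTotalDominatingSet_univ {W : Type*} [Fintype W] {H : SimpleGraph W}
    (hH : ∀ v, ∃ u, H.Adj v u) : isTotalDominatingSet H Finset.univ := fun v =>
  (hH v).imp fun u hu => ⟨Finset.mem_univ u, hu.symm⟩

namespace GLP

variable {n : ℕ} {G : SimpleGraph (Fin n)} {V : Fin n → Type*} {F : ∀ i, SimpleGraph (V i)}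

lemma adj_of_adj {i j : Fin n} (h : G.Adj i j) (x : V i) (y : V j) :
    (GLP G F).Adj ⟨i, x⟩ ⟨j, y⟩ :=
  Or.inl ⟨h.ne, h⟩

lemma adj_or_eq_of_adj {x y : Σ i, V i} (h : (GLP G F).Adj x y) : G.Adj x.1 y.1 ∨ x.1 = y.1 :=
  h.imp And.right Exists.fst

lemma connected_induce_of_section (hG : G.Connected) (hnb : ∀ i, ∃ j, G.Adj i j)
    {S : Set (Σ i, V i)} (r : ∀ i, V i) (hr : ∀ i, ⟨i, r i⟩ ∈ S) :
    ((GLP G F).induce S).Connected := by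
  let R : G →g (GLP G F).induce S := ⟨fun i => ⟨⟨i, r i⟩, hr i⟩, fun h => adj_of_adj h _ _⟩
  have reachable_section : ∀ x : S, ((GLP G F).induce S).Reachable (R x.1.1) x := by
    intro x
    obtain ⟨k, hk⟩ := hnb x.1.1
    have hkx : ((GLP G F).induce S).Adj (R k) x := adj_of_adj hk.symm (r k) x.1.2
    exact (R.map_adj hk).reachable.trans hkx.reachable
  obtain ⟨i₀⟩ := hG.nonempty
  rw [SimpleGraph.connected_iff_exists_forall_reachable]
  exact ⟨R i₀, fun x => ((hG.preconnected i₀ x.1.1).map R).trans (reachable_section x)⟩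

def sectionOver (a : ∀ i, V i) (D : Finset (Fin n)) : Finset (Σ i, V i) :=
  D.map ⟨fun i => ⟨i, a i⟩, fun _ _ h => congrArg Sigma.fst h⟩

lemma card_sectionOver (a : ∀ i, V i) (D : Finset (Fin n)) :
    (sectionOver a D).card = D.card :=
  Finset.card_map _

lemma mk_notMem_sectionOver {a r : ∀ i, V i} (har : ∀ i, a i ≠ r i) (D : Finset (Fin n))
    (i : Fin n) : (⟨i, r i⟩ : Σ i, V i) ∉ sectionOver a D := by
  simp only [sectionOver, Finset.mem_map, not_exists, not_and]
  intro j _ h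
  obtain ⟨rfl, h⟩ := Sigma.mk.inj_iff.mp h
  exact har j (eq_of_heq h)

lemma isTotalDominatingSet_sectionOver (a : ∀ i, V i) {D : Finset (Fin n)}
    (hD : isTotalDominatingSet G D) : isTotalDominatingSet (GLP G F) (sectionOver a D) := by
  rintro ⟨j, y⟩
  obtain ⟨i, hi, hij⟩ := hD j
  exact ⟨⟨i, a i⟩, Finset.mem_map_of_mem _ hi, adj_of_adj hij _ _⟩

lemma exists_lift_totalRestrained_totalOuterConnected [∀ i, Nontrivial (V i)]
    (hG : G.Connected) (hnb : ∀ i, ∃ j, G.Adj i j) {D : Finset (Fin n)}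
    (hD : isTotalDominatingSet G D) :
    ∃ D' : Finset (Σ i, V i), D'.card = D.card ∧
      isTotalRestrainedDominatingSet (GLP G F) D' ∧
      isTotalOuterConnectedDominatingSet (GLP G F) D' := by
  choose a r har using fun i => exists_pair_ne (V i)
  have hr := mk_notMem_sectionOver har D
  have htds := isTotalDominatingSet_sectionOver (F := F) a hD
  refine ⟨sectionOver a D, card_sectionOver a D, ⟨htds, fun v _ => ?_⟩,
    htds, connected_induce_of_section hG hnb r hr⟩
  obtain ⟨k, hk⟩ := hnb v.1
  exact ⟨⟨k, r k⟩, hr k, adj_of_adj hk.symm _ v.2⟩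

lemma exists_totalDominatingSet_base_card_le [∀ i, Nonempty (V i)] (hnb : ∀ i, ∃ j, G.Adj i j)
    {D : Finset (Σ i, V i)} (hD : isTotalDominatingSet (GLP G F) D) :
    ∃ D' : Finset (Fin n), isTotalDominatingSet G D' ∧ D'.card ≤ D.card := by
  choose nb hnb using hnb
  have hrep : ∀ i, ∃ r : Σ i, V i, r.1 = i ∧ ∀ u ∈ D, u.1 = i → r ∈ D := by
    intro i
    by_cases h : ∃ u ∈ D, u.1 = i
    · obtain ⟨u, hu, rfl⟩ := h
      exact ⟨u, rfl, fun _ _ _ => hu⟩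
    · exact ⟨⟨i, Classical.arbitrary _⟩, rfl, fun u hu hui => (h ⟨u, hu, hui⟩).elim⟩
  choose rep hrep_fst hrep_mem using hrep
  -- keeps each layer met by `D` through its representative and sends any other vertex of `D`
  -- to a `G`-neighbour of its layer
  let φ : (Σ i, V i) → Fin n := fun u => if u = rep u.1 then u.1 else nb u.1
  have fst_mem : ∀ u ∈ D, u.1 ∈ D.image φ := fun u hu =>
    Finset.mem_image.mpr ⟨rep u.1, hrep_mem _ u hu rfl, by simp [φ, hrep_fst]⟩
  refine ⟨D.image φ, fun j => ?_, Finset.card_image_le⟩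
  obtain ⟨u, hu, huj⟩ := hD ⟨j, Classical.arbitrary _⟩
  rcases adj_or_eq_of_adj huj with huj | rfl
  · exact ⟨u.1, fst_mem u hu, huj⟩
  by_cases hdom : ∃ w ∈ D, G.Adj w.1 u.1
  · obtain ⟨w, hw, hwu⟩ := hdom
    exact ⟨w.1, fst_mem w hw, hwu⟩
  push Not at hdom
  obtain ⟨w, hw, hwr⟩ := hD (rep u.1)
  have hw_fst : w.1 = u.1 := by
    have h := adj_or_eq_of_adj hwr
    rw [hrep_fst] at h
    exact h.resolve_left (hdom w hw)
  have hφw : φ w = nb u.1 := by simp [φ, hw_fst, hwr.ne]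
  exact ⟨nb u.1, Finset.mem_image.mpr ⟨w, hw, hφw⟩, (hnb u.1).symm⟩

end GLP

/-- If `|V(F i)| ≥ 2` for all `i`, then
`γ_t(G) = γ_t(G[Φ]) = γ_{tr}(G[Φ]) = γ_t^{oc}(G[Φ])`. -/
theorem stmt_10 {n : ℕ} (hn : 2 ≤ n) (G : SimpleGraph (Fin n)) (hG : G.Connected)
    (V : Fin n → Type) [∀ i, Fintype (V i)] (F : ∀ i, SimpleGraph (V i))
    (hV : ∀ i, 2 ≤ Fintype.card (V i)) :
    totalDomNum G = totalDomNum (GLP G F) ∧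
    totalDomNum (GLP G F) = totalRestrainedDomNum (GLP G F) ∧
    totalRestrainedDomNum (GLP G F) = totalOcDomNum (GLP G F) := by
  have : Nontrivial (Fin n) := Fin.nontrivial_iff_two_le.mpr hn
  have : ∀ i, Nontrivial (V i) := fun i => Fintype.one_lt_card_iff_nontrivial.mp (hV i)
  have hnb : ∀ i, ∃ j, G.Adj i j := hG.preconnected.exists_adj_of_nontrivial
  have lift := fun D (hD : isTotalDominatingSet G D) =>
    GLP.exists_lift_totalRestrained_totalOuterConnected (F := F) hG hnb hD
  obtain ⟨L, -, hLr, hLoc⟩ := lift _ (isTotalDominatingSet_univ hnb)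
  have h₁ : totalDomNum G ≤ totalDomNum (GLP G F) :=
    sInf_card_le_sInf_card ⟨L, hLr.1⟩ fun _ hD =>
      GLP.exists_totalDominatingSet_base_card_le hnb hD
  have h₂ : totalDomNum (GLP G F) ≤ totalRestrainedDomNum (GLP G F) :=
    sInf_card_le_sInf_card ⟨L, hLr⟩ fun D hD => ⟨D, hD.1, le_rfl⟩
  have h₃ : totalDomNum (GLP G F) ≤ totalOcDomNum (GLP G F) :=
    sInf_card_le_sInf_card ⟨L, hLoc⟩ fun D hD => ⟨D, hD.1, le_rfl⟩
  have h₄ : totalRestrainedDomNum (GLP G F) ≤ totalDomNum G :=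
    sInf_card_le_sInf_card ⟨_, isTotalDominatingSet_univ hnb⟩ fun D hD =>
      (lift D hD).imp fun _ h => ⟨h.2.1, h.1.le⟩
  have h₅ : totalOcDomNum (GLP G F) ≤ totalDomNum G :=
    sInf_card_le_sInf_card ⟨_, isTotalDominatingSet_univ hnb⟩ fun D hD =>
      (lift D hD).imp fun _ h => ⟨h.2.2, h.1.le⟩
  omega
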